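/- For the hard randomized smoothing setting: let f : ℝ^d → {1,...,K} be measurable, σ > 0, and for each class c define P_c(x) = P_{η~N(0,σ²I)}(f(x+η) = c). Then each P_c takes values in [0,1] and Σ_c P_c(x) = 1 for all x; moreover, x ↦ Φ⁻¹(P_c(x)) is (1/σ)-Lipschitz wherever P_c(x) ∈ (0,1). -/

import Mathlib

open MeasureTheory Real Set

noncomputable def Phi (x : ℝ) : ℝ :=
  ∫ t in Set.Iic x, (Real.sqrt (2 * Real.pi))⁻¹ * Real.exp (-t ^ 2 / 2)

noncomputable def PhiInv : ℝ → ℝ := Function.invFun Phi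

noncomputable def gaussMeasure (d : ℕ) (σ : ℝ) :
    Measure (EuclideanSpace ℝ (Fin d)) :=
  volume.withDensity fun x =>
    ENNReal.ofReal ((2 * Real.pi * σ ^ 2) ^ (-(d : ℝ) / 2) *
      Real.exp (-‖x‖ ^ 2 / (2 * σ ^ 2)))
open scoped Classical

/-!
The class probabilities are the Gaussian measures of the fibres `{η | f (x + η) = c}`, which
partition the space; this gives the first two claims.

For the Lipschitz bound fix `x₁ ≠ x₂`, put `v = x₁ - x₂` and `c = Φ⁻¹(P(x₁))`. Under the Gaussian,
`⟪v, η⟫ ~ N(0, σ²‖v‖²)` (compare characteristic functions), so the half-space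
`H = {ζ | -σ‖v‖c ≤ ⟪v, ζ - x₁⟫}` has smoothed probability `Φ(c) = P(x₁)` at `x₁` and
`Φ(c - ‖v‖/σ)` at `x₂`. The likelihood ratio of `N(x₂, σ²I)` against `N(x₁, σ²I)` is a decreasing
function of `⟪v, ζ - x₁⟫`, so by the Neyman–Pearson argument `H` has the least mass at `x₂` among
all sets with the same mass at `x₁`. Hence `Φ(c - ‖v‖/σ) ≤ P(x₂)`, and exchanging the two points
bounds `|Φ⁻¹(P(x₁)) - Φ⁻¹(P(x₂))|` by `‖x₁ - x₂‖/σ`.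
-/

open ProbabilityTheory Filter Topology
open scoped NNReal RealInnerProductSpace

theorem setIntegral_superlevelSet_le_of_antitone {α : Type*} [MeasurableSpace α] {μ : Measure α}
    {ρ₁ ρ₂ T : α → ℝ} {g : ℝ → ℝ} (hg : Antitone g) (hT : Measurable T) (hρ₁ : 0 ≤ ρ₁)
    (hρ : ∀ x, ρ₂ x = g (T x) * ρ₁ x) (hi₁ : Integrable ρ₁ μ) (hi₂ : Integrable ρ₂ μ)
    {A : Set α} (hA : MeasurableSet A) {t₀ : ℝ}
    (hmass : ∫ x in A, ρ₁ x ∂μ = ∫ x in {x | t₀ ≤ T x}, ρ₁ x ∂μ) :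
    ∫ x in {x | t₀ ≤ T x}, ρ₂ x ∂μ ≤ ∫ x in A, ρ₂ x ∂μ := by
  set H := {x | t₀ ≤ T x}
  have hH : MeasurableSet H := hT measurableSet_Ici
  set h := fun x => ρ₂ x - g t₀ * ρ₁ x
  have hi : Integrable h μ := hi₂.sub (hi₁.const_mul _)
  have h_nonpos : ∀ x ∈ H, h x ≤ 0 := fun x hx => by
    have := mul_le_mul_of_nonneg_right (hg hx) (hρ₁ x)
    simp only [h, hρ]
    linarith
  have h_nonneg : ∀ x ∉ H, 0 ≤ h x := fun x hx => by
    have := mul_le_mul_of_nonneg_right (hg (not_le.1 hx).le) (hρ₁ x)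
    simp only [h, hρ]
    linarith
  have key : ∫ x in H, h x ∂μ ≤ ∫ x in A, h x ∂μ := by
    rw [← integral_indicator hH, ← integral_indicator hA]
    refine integral_mono (hi.indicator hH) (hi.indicator hA) fun x => ?_
    by_cases hxH : x ∈ H <;> by_cases hxA : x ∈ A <;>
      simp [hxH, hxA, h_nonpos, h_nonneg]
  simp only [h, integral_sub hi₂.integrableOn (hi₁.const_mul _).integrableOn,
    integral_const_mul, hmass] at key
  linarith

lemma Phi_eq_setIntegral_gaussianPDFReal (x : ℝ) :
    Phi x = ∫ t in Iic x, gaussianPDFReal 0 1 t := by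
  simp [Phi, gaussianPDFReal]

lemma Phi_eq_measureReal (x : ℝ) : Phi x = (gaussianReal 0 1).real (Iic x) := by
  rw [measureReal_def, gaussianReal_apply_eq_integral 0 one_ne_zero,
    ENNReal.toReal_ofReal (setIntegral_nonneg measurableSet_Iic
      fun t _ => gaussianPDFReal_nonneg 0 1 t), Phi_eq_setIntegral_gaussianPDFReal]

lemma Phi_eq_cdf : Phi = cdf (gaussianReal 0 1) :=
  funext fun x => (Phi_eq_measureReal x).trans (cdf_eq_real _ x).symm

lemma tendsto_Phi_atBot : Tendsto Phi atBot (𝓝 0) := Phi_eq_cdf ▸ tendsto_cdf_atBot _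

lemma tendsto_Phi_atTop : Tendsto Phi atTop (𝓝 1) := Phi_eq_cdf ▸ tendsto_cdf_atTop _

lemma Phi_sub_Phi (a b : ℝ) : Phi b - Phi a = ∫ t in a..b, gaussianPDFReal 0 1 t := by
  simp only [Phi_eq_setIntegral_gaussianPDFReal]
  exact intervalIntegral.integral_Iic_sub_Iic (integrable_gaussianPDFReal 0 1).integrableOn
    (integrable_gaussianPDFReal 0 1).integrableOn

lemma continuous_Phi : Continuous Phi := by
  have h : Phi = fun x => Phi 0 + ∫ t in (0 : ℝ)..x, gaussianPDFReal 0 1 t := by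
    funext x
    rw [← Phi_sub_Phi]
    ring
  rw [h]
  exact continuous_const.add ((integrable_gaussianPDFReal 0 1).continuous_primitive 0)

lemma strictMono_Phi : StrictMono Phi := fun a b hab => by
  have := intervalIntegral.intervalIntegral_pos_of_pos_on
    (integrable_gaussianPDFReal 0 1).intervalIntegrable
    (fun t _ => gaussianPDFReal_pos 0 1 t one_ne_zero) hab
  linarith [Phi_sub_Phi a b]

lemma Phi_surjOn : SurjOn Phi univ (Ioo 0 1) := fun p hp => by
  obtain ⟨a, ha⟩ := (tendsto_Phi_atBot.eventually (gt_mem_nhds hp.1)).exists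
  obtain ⟨b, hb⟩ := (tendsto_Phi_atTop.eventually (lt_mem_nhds hp.2)).exists
  obtain ⟨x, hx⟩ := intermediate_value_univ a b continuous_Phi ⟨ha.le, hb.le⟩
  exact ⟨x, mem_univ x, hx⟩

lemma Phi_PhiInv {p : ℝ} (hp : p ∈ Ioo (0 : ℝ) 1) : Phi (PhiInv p) = p :=
  Function.invFun_eq (by simpa using Phi_surjOn hp)

lemma le_PhiInv_of_Phi_le {x p : ℝ} (hp : p ∈ Ioo (0 : ℝ) 1) (h : Phi x ≤ p) :
    x ≤ PhiInv p :=
  strictMono_Phi.le_iff_le.1 (h.trans (Phi_PhiInv hp).ge)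

noncomputable def gaussDensity (d : ℕ) (σ : ℝ) (x : EuclideanSpace ℝ (Fin d)) : ℝ :=
  (2 * π * σ ^ 2) ^ (-(d : ℝ) / 2) * exp (-‖x‖ ^ 2 / (2 * σ ^ 2))

section gaussMeasure

variable {d : ℕ} {σ : ℝ}

lemma gaussDensity_nonneg (x : EuclideanSpace ℝ (Fin d)) : 0 ≤ gaussDensity d σ x := by
  unfold gaussDensity
  positivity

lemma continuous_gaussDensity : Continuous (gaussDensity d σ) := by
  unfold gaussDensity
  fun_prop

lemma gaussDensity_add (y v : EuclideanSpace ℝ (Fin d)) :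
    gaussDensity d σ (y + v) =
      exp (-(2 * ⟪v, y⟫ + ‖v‖ ^ 2) / (2 * σ ^ 2)) * gaussDensity d σ y := by
  rw [gaussDensity, gaussDensity, norm_add_sq_real, real_inner_comm, mul_left_comm, ← exp_add,
    ← add_div]
  ring_nf

lemma gaussMeasure_eq_withDensity :
    gaussMeasure d σ = volume.withDensity fun x => ENNReal.ofReal (gaussDensity d σ x) := rfl

lemma integral_gaussMeasure {F : Type*} [NormedAddCommGroup F] [NormedSpace ℝ F]
    (g : EuclideanSpace ℝ (Fin d) → F) :
    ∫ x, g x ∂gaussMeasure d σ = ∫ x, gaussDensity d σ x • g x := by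
  rw [gaussMeasure_eq_withDensity, integral_withDensity_eq_integral_toReal_smul
    continuous_gaussDensity.measurable.ennreal_ofReal (ae_of_all _ fun _ => ENNReal.ofReal_lt_top)]
  simp_rw [ENNReal.toReal_ofReal (gaussDensity_nonneg _)]

lemma charFun_gaussMeasure (hσ : σ ≠ 0) (t : EuclideanSpace ℝ (Fin d)) :
    charFun (gaussMeasure d σ) t = Complex.exp (-(σ ^ 2 * ‖t‖ ^ 2 : ℝ) / 2) := by
  set b : ℝ := (2 * σ ^ 2)⁻¹ with hb_def
  set C : ℝ := (2 * π * σ ^ 2) ^ (-(d : ℝ) / 2)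
  have hb : 0 < (b : ℂ).re := by
    rw [Complex.ofReal_re]
    positivity
  have hρ : ∀ x : EuclideanSpace ℝ (Fin d),
      gaussDensity d σ x • Complex.exp (⟪x, t⟫ * Complex.I) =
        C * Complex.exp (-b * ‖x‖ ^ 2 + Complex.I * ⟪t, x⟫) := by
    intro x
    rw [gaussDensity, Complex.real_smul, Complex.ofReal_mul, Complex.ofReal_exp, mul_assoc,
      ← Complex.exp_add, real_inner_comm]
    congr 2
    rw [hb_def]
    push_cast
    field_simp
  have hC : (C : ℂ) * (π / b) ^ ((Module.finrank ℝ (EuclideanSpace ℝ (Fin d)) : ℂ) / 2) = 1 := by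
    rw [finrank_euclideanSpace_fin, show (π : ℂ) / b = ((2 * π * σ ^ 2 : ℝ) : ℂ) by
        rw [hb_def]; push_cast; field_simp,
      show ((d : ℂ) / 2) = ((d / 2 : ℝ) : ℂ) by push_cast; ring,
      ← Complex.ofReal_cpow (by positivity), ← Complex.ofReal_mul, ← Real.rpow_add (by positivity),
      neg_div, neg_add_cancel, Real.rpow_zero, Complex.ofReal_one]
  rw [charFun_apply, integral_gaussMeasure]
  simp_rw [hρ]
  rw [integral_const_mul, GaussianFourier.integral_cexp_neg_mul_sq_norm_add hb, ← mul_assoc, hC,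
    one_mul]
  congr 1
  rw [hb_def]
  push_cast
  field_simp
  rw [Complex.I_sq]
  ring

lemma isProbabilityMeasure_gaussMeasure (hσ : σ ≠ 0) :
    IsProbabilityMeasure (gaussMeasure d σ) := by
  have h := charFun_gaussMeasure (d := d) hσ 0
  rw [charFun_zero, norm_zero] at h
  norm_num at h
  exact ⟨ENNReal.toReal_eq_one_iff _ |>.1 h⟩

lemma integrable_gaussDensity (hσ : σ ≠ 0) : Integrable (gaussDensity d σ) := by
  have := isProbabilityMeasure_gaussMeasure (d := d) hσ
  have hmass : ∫⁻ x, ENNReal.ofReal (gaussDensity d σ x) = gaussMeasure d σ univ := by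
    rw [gaussMeasure_eq_withDensity, withDensity_apply _ MeasurableSet.univ, Measure.restrict_univ]
  simpa only [ENNReal.toReal_ofReal (gaussDensity_nonneg _)] using
    integrable_toReal_of_lintegral_ne_top (μ := volume)
      continuous_gaussDensity.measurable.ennreal_ofReal.aemeasurable (by simp [hmass])

lemma map_inner_gaussMeasure (hσ : σ ≠ 0) (v : EuclideanSpace ℝ (Fin d)) :
    (gaussMeasure d σ).map (⟪v, ·⟫) = gaussianReal 0 (σ ^ 2 * ‖v‖ ^ 2).toNNReal := by
  have := isProbabilityMeasure_gaussMeasure (d := d) hσ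
  refine Measure.ext_of_charFun (funext fun s => ?_)
  rw [charFun_gaussianReal, charFun_apply, integral_map (by fun_prop) (by fun_prop)]
  have hinner : ∀ x : EuclideanSpace ℝ (Fin d), ⟪⟪v, x⟫, s⟫ = ⟪x, s • v⟫ := fun x => by
    simp [real_inner_smul_right, real_inner_comm]
  simp_rw [hinner, ← charFun_apply, charFun_gaussMeasure hσ, norm_smul, Real.norm_eq_abs, mul_pow,
    sq_abs, Real.coe_toNNReal _ (by positivity : 0 ≤ σ ^ 2 * ‖v‖ ^ 2)]
  congr 1
  push_cast
  ring

lemma gaussMeasure_real_halfSpace (hσ : 0 < σ) {v : EuclideanSpace ℝ (Fin d)} (hv : v ≠ 0)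
    (b : ℝ) : (gaussMeasure d σ).real {η | b ≤ ⟪v, η⟫} = Phi (-b / (σ * ‖v‖)) := by
  have hc : -(σ * ‖v‖) < 0 := neg_neg_of_pos (mul_pos hσ (norm_pos_iff.2 hv))
  have hmap : (gaussMeasure d σ).map (⟪v, ·⟫) = (gaussianReal 0 1).map (-(σ * ‖v‖) * ·) := by
    rw [map_inner_gaussMeasure hσ.ne', gaussianReal_map_const_mul]
    congr 1
    · ring
    · ext
      simp [Real.coe_toNNReal _ (by positivity : 0 ≤ σ ^ 2 * ‖v‖ ^ 2)]
      ring
  have hpre : (-(σ * ‖v‖) * ·) ⁻¹' Ici b = Iic (-b / (σ * ‖v‖)) := by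
    ext y
    simp only [mem_preimage, mem_Ici, mem_Iic, ← le_div_iff_of_neg' hc, neg_div, div_neg]
  calc (gaussMeasure d σ).real {η | b ≤ ⟪v, η⟫}
      = ((gaussMeasure d σ).map (⟪v, ·⟫)).real (Ici b) := by
        rw [map_measureReal_apply (by fun_prop) measurableSet_Ici]
        rfl
    _ = Phi (-b / (σ * ‖v‖)) := by
        rw [hmap, map_measureReal_apply (by fun_prop) measurableSet_Ici, hpre, Phi_eq_measureReal]

end gaussMeasure

noncomputable def smoothedProb {d : ℕ} (σ : ℝ) (A : Set (EuclideanSpace ℝ (Fin d)))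
    (x : EuclideanSpace ℝ (Fin d)) : ℝ :=
  (gaussMeasure d σ).real ((x + ·) ⁻¹' A)

section smoothedProb

variable {d : ℕ} {σ : ℝ} {A : Set (EuclideanSpace ℝ (Fin d))}

lemma smoothedProb_mem_Icc (hσ : σ ≠ 0) (x : EuclideanSpace ℝ (Fin d)) :
    smoothedProb σ A x ∈ Icc (0 : ℝ) 1 :=
  have := isProbabilityMeasure_gaussMeasure (d := d) hσ
  ⟨measureReal_nonneg, measureReal_le_one⟩

lemma sum_smoothedProb_preimage_singleton {ι : Type*} [Fintype ι] [MeasurableSpace ι]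
    [MeasurableSingletonClass ι] (hσ : σ ≠ 0) {f : EuclideanSpace ℝ (Fin d) → ι}
    (hf : Measurable f) (x : EuclideanSpace ℝ (Fin d)) :
    ∑ i, smoothedProb σ (f ⁻¹' {i}) x = 1 := by
  have := isProbabilityMeasure_gaussMeasure (d := d) hσ
  have hfx : Measurable fun η => f (x + η) := hf.comp (measurable_const_add x)
  rw [← probReal_univ (μ := gaussMeasure d σ), ← preimage_univ (f := fun η => f (x + η)),
    ← Finset.coe_univ,
    ← sum_measureReal_preimage_singleton _ fun i _ => hfx (measurableSet_singleton i)]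
  rfl

lemma smoothedProb_eq_setIntegral (hA : MeasurableSet A) (x : EuclideanSpace ℝ (Fin d)) :
    smoothedProb σ A x = ∫ ζ in A, gaussDensity d σ (ζ - x) :=
  calc smoothedProb σ A x = ∫ η, ((x + ·) ⁻¹' A).indicator 1 η ∂gaussMeasure d σ :=
        (integral_indicator_one (measurable_const_add x hA)).symm
    _ = ∫ η, A.indicator (fun ζ => gaussDensity d σ (ζ - x)) (x + η) := by
        rw [integral_gaussMeasure]
        congr 1 with η
        by_cases h : x + η ∈ A <;> simp [h]
    _ = ∫ ζ in A, gaussDensity d σ (ζ - x) := by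
        rw [integral_add_left_eq_self, integral_indicator hA]

lemma smoothedProb_halfSpace (hσ : 0 < σ) {v : EuclideanSpace ℝ (Fin d)} (hv : v ≠ 0) (t : ℝ)
    (x y : EuclideanSpace ℝ (Fin d)) :
    smoothedProb σ {ζ | t ≤ ⟪v, ζ - y⟫} x = Phi ((⟪v, x - y⟫ - t) / (σ * ‖v‖)) := by
  have hpre : (x + ·) ⁻¹' {ζ | t ≤ ⟪v, ζ - y⟫} = {η | t - ⟪v, x - y⟫ ≤ ⟪v, η⟫} := by
    ext η
    change t ≤ ⟪v, x + η - y⟫ ↔ t - ⟪v, x - y⟫ ≤ ⟪v, η⟫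
    rw [show x + η - y = η + (x - y) by abel, inner_add_right, sub_le_iff_le_add]
  rw [smoothedProb, hpre, gaussMeasure_real_halfSpace hσ hv, neg_sub]

theorem PhiInv_smoothedProb_sub_le (hσ : 0 < σ) (hA : MeasurableSet A)
    {x₁ x₂ : EuclideanSpace ℝ (Fin d)} (h₁ : smoothedProb σ A x₁ ∈ Ioo (0 : ℝ) 1)
    (h₂ : smoothedProb σ A x₂ ∈ Ioo (0 : ℝ) 1) :
    PhiInv (smoothedProb σ A x₁) - PhiInv (smoothedProb σ A x₂) ≤ ‖x₁ - x₂‖ / σ := by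
  rcases eq_or_ne x₁ x₂ with rfl | hne
  · simp
  set v := x₁ - x₂ with hv_def
  set δ := ‖v‖
  set c := PhiInv (smoothedProb σ A x₁)
  have hv : v ≠ 0 := sub_ne_zero.2 hne
  have hδ : 0 < δ := norm_pos_iff.2 hv
  set H := {ζ | -(σ * δ * c) ≤ ⟪v, ζ - x₁⟫}
  have hH : MeasurableSet H := measurableSet_le measurable_const (by fun_prop)
  have hH₁ : smoothedProb σ H x₁ = smoothedProb σ A x₁ := by
    rw [smoothedProb_halfSpace hσ hv, sub_self, inner_zero_right, zero_sub, neg_neg,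
      mul_div_cancel_left₀ _ (mul_pos hσ hδ).ne', Phi_PhiInv h₁]
  have hH₂ : smoothedProb σ H x₂ = Phi (c - δ / σ) := by
    rw [smoothedProb_halfSpace hσ hv, ← neg_sub x₁, inner_neg_right, real_inner_self_eq_norm_sq]
    congr 1
    field_simp
    ring
  have hNP : smoothedProb σ H x₂ ≤ smoothedProb σ A x₂ := by
    rw [smoothedProb_eq_setIntegral hH, smoothedProb_eq_setIntegral hA]
    refine setIntegral_superlevelSet_le_of_antitone (μ := volume)
      (g := fun t => exp (-(2 * t + δ ^ 2) / (2 * σ ^ 2))) (fun s t hst => ?_) (by fun_prop)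
      (fun ζ => gaussDensity_nonneg _) (fun ζ => ?_)
      ((integrable_gaussDensity hσ.ne').comp_sub_right x₁)
      ((integrable_gaussDensity hσ.ne').comp_sub_right x₂) hA ?_
    · dsimp only
      gcongr
    · rw [show ζ - x₂ = (ζ - x₁) + v by rw [hv_def]; abel, gaussDensity_add]
    · rw [← smoothedProb_eq_setIntegral hA, ← smoothedProb_eq_setIntegral hH, hH₁]
  linarith [le_PhiInv_of_Phi_le h₂ (hH₂ ▸ hNP)]

theorem abs_PhiInv_smoothedProb_sub_le (hσ : 0 < σ) (hA : MeasurableSet A)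
    {x₁ x₂ : EuclideanSpace ℝ (Fin d)} (h₁ : smoothedProb σ A x₁ ∈ Ioo (0 : ℝ) 1)
    (h₂ : smoothedProb σ A x₂ ∈ Ioo (0 : ℝ) 1) :
    |PhiInv (smoothedProb σ A x₁) - PhiInv (smoothedProb σ A x₂)| ≤ ‖x₁ - x₂‖ / σ :=
  abs_sub_le_iff.2 ⟨PhiInv_smoothedProb_sub_le hσ hA h₁ h₂,
    norm_sub_rev x₁ x₂ ▸ PhiInv_smoothedProb_sub_le hσ hA h₂ h₁⟩

end smoothedProb

theorem hard_rs_class_probs (d K : ℕ) (σ : ℝ) (hσ : 0 < σ)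
    (f : EuclideanSpace ℝ (Fin d) → Fin K) (hf : Measurable f)
    (P : Fin K → EuclideanSpace ℝ (Fin d) → ℝ)
    (hP : ∀ c x, P c x =
      ∫ η, (if f (x + η) = c then (1 : ℝ) else 0) ∂(gaussMeasure d σ)) :
    (∀ c x, P c x ∈ Set.Icc (0 : ℝ) 1) ∧
    (∀ x, ∑ c, P c x = 1) ∧
    (∀ c, ∀ x₁ x₂, P c x₁ ∈ Set.Ioo (0 : ℝ) 1 → P c x₂ ∈ Set.Ioo (0 : ℝ) 1 →
      |PhiInv (P c x₁) - PhiInv (P c x₂)| ≤ (1 / σ) * ‖x₁ - x₂‖) := by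
  have hfc : ∀ c, MeasurableSet (f ⁻¹' {c}) := fun c => hf (measurableSet_singleton c)
  have hPc : ∀ c x, P c x = smoothedProb σ (f ⁻¹' {c}) x := fun c x => by
    rw [hP, smoothedProb, ← integral_indicator_one (measurable_const_add x (hfc c))]
    congr 1 with η
    simp [indicator]
  simp only [hPc]
  refine ⟨fun c x => smoothedProb_mem_Icc hσ.ne' x,
    sum_smoothedProb_preimage_singleton hσ.ne' hf, fun c x₁ x₂ h₁ h₂ => ?_⟩
  rw [one_div_mul_eq_div]
  exact abs_PhiInv_smoothedProb_sub_le hσ (hfc c) h₁ h₂
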